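/- For λ₀ ∈ P⁺ and μ ∈ P, the closed formula g^μ_{0,2λ₀} = (−1)^{(2λ₀−μ, ρ)} q^{(1/2)(2λ₀−μ, μ+ρ+(2λ₀−μ)^∨)} Π_{i=1}^n binom((λ₀, α_i), (2λ₀−μ, ω_i))_q satisfies the recursion g_{0,λ}^μ = q^{(2ω_j, λ−μ)} g_{0,λ−2ω_j}^{μ−2ω_j} − q^{(λ₀,α_j) + (2ω_j−α_j, λ−α_j−μ)} g_{0,λ−2ω_j}^{μ−2ω_j+α_j} with λ = 2λ₀, whenever (λ₀, α_j) > 0, together with the initial condition g^μ_{0,0} = δ_{μ,0}. -/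

import Mathlib

open Finset

abbrev Wt (n : ℕ) := Fin n → ℤ

def omegaW (n : ℕ) (k : ℕ) : Wt n := fun i => if (i : ℕ) + 1 = k then 1 else 0

def alphaW (n : ℕ) (k : ℕ) : Wt n := fun i =>
  if (i : ℕ) + 1 = k then 2 else if (i : ℕ) + 2 = k ∨ (i : ℕ) = k then -1 else 0

def coeffW (n : ℕ) (l : Wt n) (k : ℕ) : ℤ := ∑ i : Fin n, if (i : ℕ) + 1 = k then l i else 0

def IsDom (n : ℕ) (l : Wt n) : Prop := ∀ i, 0 ≤ l i

def IsDomOne (n : ℕ) (l : Wt n) : Prop := ∀ i, 0 ≤ l i ∧ l i ≤ 1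

def InQplus (n : ℕ) (w : Wt n) : Prop :=
  ∃ c : ℕ → ℕ, w = ∑ k ∈ Finset.Icc 1 n, (c k : ℤ) • alphaW n k

def InQ (n : ℕ) (w : Wt n) : Prop :=
  ∃ c : ℕ → ℤ, w = ∑ k ∈ Finset.Icc 1 n, c k • alphaW n k

noncomputable def formW (n : ℕ) (x y : Wt n) : ℚ :=
  ∑ i : Fin n, ∑ j : Fin n, (x i : ℚ) * (y j : ℚ) *
    ((((min i.val j.val : ℕ) : ℚ) + 1) * ((n : ℚ) + 1 - (((max i.val j.val : ℕ) : ℚ) + 1)) / ((n : ℚ) + 1))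

noncomputable def qpow (r : ℚ) : RatFunc ℚ := if r.den = 1 then RatFunc.X ^ r.num else 0

noncomputable def qint (k : ℤ) : RatFunc ℚ := (1 - RatFunc.X ^ k) / (1 - RatFunc.X)

noncomputable def qbinom (m r : ℤ) : RatFunc ℚ :=
  if 0 ≤ r ∧ r ≤ m then ∏ k ∈ Finset.range r.toNat, qint (m - (k : ℤ)) / qint ((k : ℤ) + 1) else 0

noncomputable def qbinomQ (m r : ℚ) : RatFunc ℚ :=
  if m.den = 1 ∧ r.den = 1 then qbinom m.num r.num else 0

noncomputable def negOnePow (r : ℚ) : RatFunc ℚ := if r.den = 1 then (-1 : RatFunc ℚ) ^ r.num else 0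

def rhoW (n : ℕ) : Wt n := fun _ => 1

/-- The closed formula for g^μ_{0,2λ₀}; note (η, η^∨) = Σ_i (η, ω_i)² for η ∈ Q. -/
noncomputable def gClosed (n : ℕ) (l0 mu : Wt n) : RatFunc ℚ :=
  negOnePow (formW n (2 • l0 - mu) (rhoW n)) *
    qpow ((formW n (2 • l0 - mu) (mu + rhoW n) +
      ∑ i ∈ Finset.Icc 1 n, (formW n (2 • l0 - mu) (omegaW n i)) ^ 2) / 2) *
    ∏ i ∈ Finset.Icc 1 n,
      qbinomQ (formW n l0 (alphaW n i)) (formW n (2 • l0 - mu) (omegaW n i))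

/-!
The form `formW` is the inverse Cartan matrix of `A_n` written in the basis of fundamental
weights, so pairing with a simple root reads off a coordinate: `(x, α_j) = x_j`. Put
`η = 2λ₀ - μ`. Passing to `(λ₀ - ω_j, μ - 2ω_j)` keeps `η` and lowers the top entry `(λ₀, α_j)`
of the `j`-th binomial by one; passing to `(λ₀ - ω_j, μ - 2ω_j + α_j)` replaces `η` by `η - α_j`,
which lowers both `(η, ω_j)` and `(η, ρ)` by one. Once the exponents are compared, the recursion
is the q-Pascal identity for the `j`-th binomial. The junk values of `qpow`, `negOnePow` and
`qbinomQ` off the integers are harmless, since both sides vanish when `(η, ω_j) ∉ ℤ`.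
The initial condition holds because the form is nondegenerate: for `μ ≠ 0` some `(μ, ω_i) ≠ 0`,
and `binom(0, r)_q = 0` for `r ≠ 0`.
-/

lemma one_sub_X_pow_ne_zero {s : ℕ} (hs : 0 < s) : (1 - RatFunc.X ^ s : RatFunc ℚ) ≠ 0 := by
  have h := (map_ne_zero_iff _ (RatFunc.algebraMap_injective ℚ)).mpr
    (Polynomial.X_pow_sub_C_ne_zero hs (1 : ℚ))
  rw [map_sub, map_pow, RatFunc.algebraMap_X, RatFunc.algebraMap_C, map_one] at h
  exact sub_ne_zero.mpr (sub_ne_zero.mp h).symm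

lemma qint_ne_zero {k : ℤ} (hk : 0 < k) : qint k ≠ 0 := by
  lift k to ℕ using hk.le
  rw [qint, zpow_natCast]
  exact div_ne_zero (one_sub_X_pow_ne_zero (by omega))
    (by simpa using one_sub_X_pow_ne_zero one_pos)

lemma qint_zero : qint 0 = 0 := by
  simp [qint]

lemma qint_add (a b : ℤ) : qint (a + b) = qint a + RatFunc.X ^ a * qint b := by
  rw [qint, qint, qint, zpow_add₀ RatFunc.X_ne_zero]
  ring

lemma qbinom_of_neg {m r : ℤ} (hr : r < 0) : qbinom m r = 0 := by
  rw [qbinom, if_neg (by omega)]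

/-- For `m ≥ 0` the range condition in `qbinom` is automatic: the factor `qint 0` kills the
product beyond it. -/
lemma qbinom_natCast {m : ℤ} (hm : 0 ≤ m) (t : ℕ) :
    qbinom m t = (∏ k ∈ range t, qint (m - k)) / ∏ k ∈ range t, qint (k + 1) := by
  rw [qbinom, Int.toNat_natCast, prod_div_distrib]
  split_ifs with h
  · rfl
  · lift m to ℕ using hm
    rw [prod_eq_zero (mem_range.mpr (by omega : m < t)) (by rw [sub_self, qint_zero]), zero_div]

lemma qbinom_pascal {m : ℤ} (hm : 1 ≤ m) (r : ℤ) :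
    qbinom m r = RatFunc.X ^ r * qbinom (m - 1) r + qbinom (m - 1) (r - 1) := by
  rcases lt_trichotomy r 0 with hr | rfl | hr
  · simp [qbinom_of_neg hr, qbinom_of_neg (by omega : r - 1 < 0)]
  · simp [qbinom, hm, show (0 : ℤ) ≤ m by omega]
  obtain ⟨t, rfl⟩ : ∃ t : ℕ, r = t + 1 := ⟨r.toNat - 1, by omega⟩
  have hnum :
      ∏ k ∈ range (t + 1), qint (m - k) = qint m * ∏ k ∈ range t, qint (m - 1 - k) := by
    rw [prod_range_succ', mul_comm, Nat.cast_zero, sub_zero]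
    congr 1
    exact prod_congr rfl fun k _ => by push_cast; ring_nf
  have hden := qint_ne_zero (by omega : (0 : ℤ) < t + 1)
  have hden' : ∏ k ∈ range t, qint ((k : ℤ) + 1) ≠ 0 :=
    prod_ne_zero_iff.mpr fun k _ => qint_ne_zero (by omega)
  have hsplit : qint m = qint (t + 1) + RatFunc.X ^ ((t : ℤ) + 1) * qint (m - 1 - t) := by
    rw [← qint_add]
    ring_nf
  rw [add_sub_cancel_right, show (t : ℤ) + 1 = ((t + 1 : ℕ) : ℤ) by push_cast; ring,
    qbinom_natCast (by omega), qbinom_natCast (by omega), qbinom_natCast (by omega), hnum,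
    prod_range_succ, prod_range_succ, hsplit]
  push_cast
  field_simp
  ring

lemma exists_intCast_of_den_eq_one {r : ℚ} (hr : r.den = 1) : ∃ z : ℤ, r = z :=
  ⟨r.num, (Rat.coe_int_num_of_den_eq_one hr).symm⟩

lemma qpow_intCast (z : ℤ) : qpow z = RatFunc.X ^ z := by
  rw [qpow, if_pos (Rat.den_intCast z), Rat.num_intCast]

lemma qpow_intCast_add (z : ℤ) (r : ℚ) : qpow (z + r) = RatFunc.X ^ z * qpow r := by
  by_cases hr : r.den = 1
  · obtain ⟨w, rfl⟩ := exists_intCast_of_den_eq_one hr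
    rw [← Int.cast_add, qpow_intCast, qpow_intCast, zpow_add₀ RatFunc.X_ne_zero]
  · rw [qpow, qpow, if_neg hr, if_neg (by rwa [Rat.intCast_add_den]), mul_zero]

lemma negOnePow_intCast (z : ℤ) : negOnePow z = (-1) ^ z := by
  rw [negOnePow, if_pos (Rat.den_intCast z), Rat.num_intCast]

lemma negOnePow_sub_one (r : ℚ) : negOnePow (r - 1) = -negOnePow r := by
  by_cases hr : r.den = 1
  · obtain ⟨z, rfl⟩ := exists_intCast_of_den_eq_one hr
    rw [← Int.cast_one, ← Int.cast_sub, negOnePow_intCast, negOnePow_intCast,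
      zpow_sub_one₀ (by norm_num), inv_neg_one, mul_neg_one]
  · have hr' : (r - 1).den ≠ 1 := by simpa using (Rat.sub_intCast_den r 1).trans_ne hr
    rw [negOnePow, negOnePow, if_neg hr, if_neg hr', neg_zero]

lemma qbinomQ_intCast (m r : ℤ) : qbinomQ m r = qbinom m r := by
  rw [qbinomQ, if_pos ⟨Rat.den_intCast m, Rat.den_intCast r⟩, Rat.num_intCast, Rat.num_intCast]

lemma qbinomQ_of_den_ne_one (m : ℚ) {r : ℚ} (hr : r.den ≠ 1) : qbinomQ m r = 0 := by
  rw [qbinomQ, if_neg fun h => hr h.2]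

lemma qbinomQ_zero_zero : qbinomQ 0 0 = 1 := by
  simpa [qbinom] using qbinomQ_intCast 0 0

lemma qbinomQ_zero_left {r : ℚ} (hr : r ≠ 0) : qbinomQ 0 r = 0 := by
  by_cases hr' : r.den = 1
  · obtain ⟨z, rfl⟩ := exists_intCast_of_den_eq_one hr'
    rw [← Int.cast_zero, qbinomQ_intCast, qbinom, if_neg (by norm_cast at hr; omega)]
  · exact qbinomQ_of_den_ne_one 0 hr'

/-- The recursion for the closed formula with `m = (λ₀, α_j)`, `r = (η, ω_j)`, `S = (η, ρ)`,
`E` the exponent of `q` and `P` the product of the binomials for `i ≠ j`. -/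
lemma qbinomQ_pascal_step {m : ℤ} (hm : 1 ≤ m) (S E r : ℚ) (c : ℤ) (P : RatFunc ℚ) :
    negOnePow S * qpow E * (qbinomQ m r * P) =
      qpow (2 * r) * (negOnePow S * qpow (E - r) * (qbinomQ (m - 1) r * P)) -
        qpow (2 * r + c) *
          (negOnePow (S - 1) * qpow (E - (2 * r + c)) * (qbinomQ (m - 1) (r - 1) * P)) := by
  by_cases hr : r.den = 1
  · obtain ⟨z, rfl⟩ := exists_intCast_of_den_eq_one hr
    have hpascal := qbinom_pascal hm z
    rw [← qbinomQ_intCast, ← qbinomQ_intCast, ← qbinomQ_intCast] at hpascal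
    push_cast at hpascal
    have hE₁ : qpow E = RatFunc.X ^ z * qpow (E - z) := by
      rw [← qpow_intCast_add, add_sub_cancel]
    have hE₂ : qpow E = RatFunc.X ^ (2 * z + c) * qpow (E - (2 * z + c)) := by
      rw [← qpow_intCast_add]
      push_cast
      rw [add_sub_cancel]
    have h2z : qpow (2 * z) = RatFunc.X ^ z * RatFunc.X ^ z := by
      rw [← zpow_add₀ RatFunc.X_ne_zero, ← two_mul, ← qpow_intCast]
      push_cast
      rfl
    have h2zc : qpow (2 * z + c) = RatFunc.X ^ (2 * z + c) := by
      rw [← qpow_intCast]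
      push_cast
      rfl
    rw [hpascal, h2z, h2zc, negOnePow_sub_one]
    linear_combination (negOnePow S * RatFunc.X ^ z * qbinomQ (m - 1) z * P) * hE₁ +
      (negOnePow S * qbinomQ (m - 1) (z - 1) * P) * hE₂
  · have hr' : (r - 1).den ≠ 1 := by simpa using (Rat.sub_intCast_den r 1).trans_ne hr
    simp [qbinomQ_of_den_ne_one _ hr, qbinomQ_of_den_ne_one _ hr']

lemma Finset.sum_sq_sub_ite {ι R : Type*} [DecidableEq ι] [CommRing R] {s : Finset ι} {j : ι}
    (hj : j ∈ s) (f : ι → R) :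
    ∑ i ∈ s, (f i - if j = i then 1 else 0) ^ 2 = ∑ i ∈ s, f i ^ 2 - 2 * f j + 1 := by
  have h (i : ι) :
      (f i - if j = i then 1 else 0) ^ 2 = f i ^ 2 + if j = i then 1 - 2 * f i else 0 := by
    split_ifs <;> ring
  simp only [h, sum_add_distrib, sum_ite_eq, if_pos hj]
  ring

lemma two_nsmul_sub_sub_sub_two_nsmul {G : Type*} [AddCommGroup G] (a b c : G) :
    2 • (a - b) - (c - 2 • b) = 2 • a - c := by
  abel

lemma two_nsmul_sub_sub_sub_two_nsmul_add {G : Type*} [AddCommGroup G] (a b c d : G) :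
    2 • (a - b) - (c - 2 • b + d) = 2 • a - c - d := by
  abel

/-- The `(a, b)` entry of the inverse Cartan matrix of `A_n`, indexed from `1` as in the paper;
`formW` is this matrix in the basis of fundamental weights. It vanishes for `b = 0` and
`b = n + 1`, which absorbs the boundary cases of `alphaW`. -/
def invCartan (n a b : ℕ) : ℚ :=
  (min a b : ℕ) * ((n : ℚ) + 1 - (max a b : ℕ)) / ((n : ℚ) + 1)

lemma invCartan_second_diff (n a k : ℕ) :
    2 * invCartan n a (k + 1) - invCartan n a k - invCartan n a (k + 2) =
      if a = k + 1 then 1 else 0 := by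
  have hn : (n : ℚ) + 1 ≠ 0 := by positivity
  unfold invCartan
  rcases lt_trichotomy a (k + 1) with h | rfl | h
  · rw [if_neg h.ne, min_eq_left (by omega), min_eq_left (by omega), min_eq_left (by omega),
      max_eq_right (by omega), max_eq_right (by omega), max_eq_right (by omega)]
    push_cast
    field_simp
    ring
  · rw [if_pos rfl, min_self, max_self, min_eq_right (by omega), max_eq_left (by omega),
      min_eq_left (by omega), max_eq_right (by omega)]
    push_cast
    field_simp
    ring
  · rw [if_neg h.ne', min_eq_right (by omega), min_eq_right (by omega), min_eq_right (by omega),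
      max_eq_left (by omega), max_eq_left (by omega), max_eq_left (by omega)]
    push_cast
    field_simp
    ring

lemma invCartan_zero_right (n a : ℕ) : invCartan n a 0 = 0 := by
  simp [invCartan]

lemma invCartan_n_add_one_right (n a : ℕ) (ha : a ≤ n + 1) : invCartan n a (n + 1) = 0 := by
  simp [invCartan, max_eq_right ha]

section Weights

variable {n : ℕ}

lemma formW_comm (x y : Wt n) : formW n x y = formW n y x := by
  unfold formW
  rw [Finset.sum_comm]
  refine Finset.sum_congr rfl fun i _ => Finset.sum_congr rfl fun j _ => ?_
  rw [min_comm j.val, max_comm j.val]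
  ring

lemma formW_add_left (x y z : Wt n) : formW n (x + y) z = formW n x z + formW n y z := by
  simp only [formW, Pi.add_apply, Int.cast_add, add_mul, Finset.sum_add_distrib]

lemma formW_sub_left (x y z : Wt n) : formW n (x - y) z = formW n x z - formW n y z := by
  simp only [formW, Pi.sub_apply, Int.cast_sub, sub_mul, Finset.sum_sub_distrib]

lemma formW_nsmul_left (c : ℕ) (x y : Wt n) : formW n (c • x) y = c * formW n x y := by
  simp only [formW, Pi.smul_apply, nsmul_eq_mul, Int.cast_mul, Int.cast_natCast, Finset.mul_sum,
    mul_assoc]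

lemma formW_zero_left (y : Wt n) : formW n 0 y = 0 := by
  simp [formW]

lemma formW_add_right (x y z : Wt n) : formW n x (y + z) = formW n x y + formW n x z := by
  simp only [formW_comm x, formW_add_left]

lemma formW_sub_right (x y z : Wt n) : formW n x (y - z) = formW n x y - formW n x z := by
  simp only [formW_comm x, formW_sub_left]

lemma formW_nsmul_right (c : ℕ) (x y : Wt n) : formW n x (c • y) = c * formW n x y := by
  simp only [formW_comm x, formW_nsmul_left]

lemma formW_zero_right (x : Wt n) : formW n x 0 = 0 := by
  rw [formW_comm, formW_zero_left]

lemma alphaW_succ (k : ℕ) :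
    alphaW n (k + 1) = 2 • omegaW n (k + 1) - omegaW n k - omegaW n (k + 2) := by
  funext i
  simp only [alphaW, omegaW, Pi.sub_apply, nsmul_eq_mul, Nat.cast_ofNat, Pi.mul_apply,
    Pi.ofNat_apply]
  split_ifs <;> omega

lemma formW_eq_sum_invCartan (x y : Wt n) :
    formW n x y = ∑ p : Fin n, ∑ q : Fin n, x p * y q * invCartan n (p + 1) (q + 1) := by
  simp only [formW, invCartan]
  push_cast
  simp only [min_add_add_right, max_add_add_right]

lemma sum_omegaW_mul (b : ℕ) (hb : b ≤ n + 1) (f : ℕ → ℚ) (hf0 : f 0 = 0)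
    (hfn : f (n + 1) = 0) : ∑ q : Fin n, (omegaW n b q : ℚ) * f (q + 1) = f b := by
  rcases Nat.eq_zero_or_pos b with rfl | hb0
  · simp [omegaW, hf0]
  rcases hb.eq_or_lt with rfl | hbn
  · rw [hfn]
    exact Finset.sum_eq_zero fun q _ => by simp [omegaW, q.isLt.ne]
  rw [Finset.sum_eq_single ⟨b - 1, by omega⟩]
  · simp only [omegaW, show b - 1 + 1 = b by omega, if_true, Int.cast_one, one_mul]
  · intro q _ hq
    simp only [omegaW, Int.cast_ite, Int.cast_one, Int.cast_zero, ite_mul, one_mul, zero_mul]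
    rw [if_neg fun h => hq (Fin.ext (by simp; omega))]
  · simp

lemma formW_omegaW_right (x : Wt n) (b : ℕ) (hb : b ≤ n + 1) :
    formW n x (omegaW n b) = ∑ p : Fin n, x p * invCartan n (p + 1) b := by
  rw [formW_eq_sum_invCartan]
  refine Finset.sum_congr rfl fun p _ => ?_
  simp only [mul_assoc, ← Finset.mul_sum]
  rw [sum_omegaW_mul b hb _ (invCartan_zero_right n _) (invCartan_n_add_one_right n _ (by omega))]

lemma formW_alphaW_right (x : Wt n) (p : Fin n) : formW n x (alphaW n (p + 1)) = x p := by
  have hp := p.isLt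
  calc formW n x (alphaW n (p + 1))
      = ∑ q : Fin n, x q * (2 * invCartan n (q + 1) (p + 1) - invCartan n (q + 1) p
          - invCartan n (q + 1) (p + 2)) := by
        rw [alphaW_succ, formW_sub_right, formW_sub_right, formW_nsmul_right,
          formW_omegaW_right _ _ (by omega), formW_omegaW_right _ _ (by omega),
          formW_omegaW_right _ _ (by omega), Finset.mul_sum, ← Finset.sum_sub_distrib,
          ← Finset.sum_sub_distrib]
        push_cast
        ring_nf
    _ = ∑ q : Fin n, (x q : ℚ) * if q = p then 1 else 0 := by
        simp only [invCartan_second_diff, add_left_inj, Fin.val_inj]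
    _ = x p := by simp

lemma formW_alphaW_left (x : Wt n) (p : Fin n) : formW n (alphaW n (p + 1)) x = x p := by
  rw [formW_comm, formW_alphaW_right]

lemma formW_omegaW_alphaW {i : ℕ} (hi : i ∈ Icc 1 n) (j : ℕ) :
    formW n (omegaW n j) (alphaW n i) = if j = i then 1 else 0 := by
  obtain ⟨p, rfl⟩ : ∃ p : Fin n, (p : ℕ) + 1 = i :=
    ⟨⟨i - 1, by grind⟩, by grind⟩
  rw [formW_alphaW_right, omegaW]
  split_ifs <;> first | rfl | omega

lemma omegaW_eq_zero {b : ℕ} (hb : b ∉ Icc 1 n) : omegaW n b = 0 := by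
  funext i
  rw [omegaW, if_neg (by grind)]
  rfl

lemma eq_zero_of_formW_omegaW (x : Wt n) (hx : ∀ i ∈ Icc 1 n, formW n x (omegaW n i) = 0) :
    x = 0 := by
  have h (b : ℕ) : formW n x (omegaW n b) = 0 := by
    by_cases hb : b ∈ Icc 1 n
    · exact hx b hb
    · rw [omegaW_eq_zero hb, formW_zero_right]
  funext p
  have hxp := formW_alphaW_right x p
  rw [alphaW_succ, formW_sub_right, formW_sub_right, formW_nsmul_right, h, h, h] at hxp
  exact_mod_cast (by simpa using hxp.symm : (x p : ℚ) = 0)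

noncomputable def gExponent (n : ℕ) (l0 mu : Wt n) : ℚ :=
  (formW n (2 • l0 - mu) (mu + rhoW n) +
    ∑ i ∈ Icc 1 n, formW n (2 • l0 - mu) (omegaW n i) ^ 2) / 2

noncomputable def gFactor (n : ℕ) (l0 mu : Wt n) (i : ℕ) : RatFunc ℚ :=
  qbinomQ (formW n l0 (alphaW n i)) (formW n (2 • l0 - mu) (omegaW n i))

lemma gClosed_eq_mul_prod_erase (l0 mu : Wt n) {j : ℕ} (hj : j ∈ Icc 1 n) :
    gClosed n l0 mu = negOnePow (formW n (2 • l0 - mu) (rhoW n)) * qpow (gExponent n l0 mu) *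
      (gFactor n l0 mu j * ∏ i ∈ (Icc 1 n).erase j, gFactor n l0 mu i) := by
  rw [mul_prod_erase _ _ hj]
  rfl

lemma gExponent_sub_omegaW (l0 mu : Wt n) (j : ℕ) :
    gExponent n (l0 - omegaW n j) (mu - 2 • omegaW n j) =
      gExponent n l0 mu - formW n (2 • l0 - mu) (omegaW n j) := by
  rw [gExponent, gExponent, two_nsmul_sub_sub_sub_two_nsmul,
    show mu - 2 • omegaW n j + rhoW n = mu + rhoW n - 2 • omegaW n j by abel,
    formW_sub_right, formW_nsmul_right]
  push_cast
  ring

lemma gExponent_sub_omegaW_add_alphaW (l0 mu : Wt n) (p : Fin n) :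
    gExponent n (l0 - omegaW n (p + 1)) (mu - 2 • omegaW n (p + 1) + alphaW n (p + 1)) =
      gExponent n l0 mu - (2 * formW n (2 • l0 - mu) (omegaW n (p + 1)) +
        ((mu p - l0 p : ℤ) : ℚ)) := by
  have hj : (p : ℕ) + 1 ∈ Icc 1 n := mem_Icc.mpr ⟨by omega, p.isLt⟩
  have hsum : ∑ i ∈ Icc 1 n, formW n (2 • l0 - mu - alphaW n (p + 1)) (omegaW n i) ^ 2 =
      ∑ i ∈ Icc 1 n,
        (formW n (2 • l0 - mu) (omegaW n i) - if (p : ℕ) + 1 = i then 1 else 0) ^ 2 := by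
    refine sum_congr rfl fun i _ => ?_
    rw [formW_sub_left, formW_alphaW_left, omegaW]
    push_cast
    rfl
  have hcross : formW n (2 • l0 - mu - alphaW n (p + 1))
      (mu - 2 • omegaW n (p + 1) + alphaW n (p + 1) + rhoW n) =
      formW n (2 • l0 - mu) (mu + rhoW n) - 2 * formW n (2 • l0 - mu) (omegaW n (p + 1)) +
        (2 • l0 - mu) p - mu p - 1 := by
    rw [formW_sub_left, formW_alphaW_left,
      show mu - 2 • omegaW n (p + 1) + alphaW n (p + 1) + rhoW n =
        mu + rhoW n - 2 • omegaW n (p + 1) + alphaW n (p + 1) by abel,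
      formW_add_right, formW_sub_right, formW_nsmul_right, formW_alphaW_right]
    simp [omegaW, alphaW, rhoW]
    ring
  have hηp : ((2 • l0 - mu) p : ℚ) = 2 * l0 p - mu p := by
    rw [Pi.sub_apply, Pi.smul_apply, two_nsmul]
    push_cast
    ring
  rw [gExponent, gExponent, two_nsmul_sub_sub_sub_two_nsmul_add, hsum, sum_sq_sub_ite hj, hcross,
    hηp]
  push_cast
  ring

lemma gFactor_sub_omegaW_of_ne (l0 mu : Wt n) {i j : ℕ} (hi : i ∈ Icc 1 n) (hij : j ≠ i) :
    gFactor n (l0 - omegaW n j) (mu - 2 • omegaW n j) i = gFactor n l0 mu i := by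
  rw [gFactor, gFactor, two_nsmul_sub_sub_sub_two_nsmul, formW_sub_left, formW_omegaW_alphaW hi,
    if_neg hij, sub_zero]

lemma gFactor_sub_omegaW_add_alphaW_of_ne (l0 mu : Wt n) (p : Fin n) {i : ℕ} (hi : i ∈ Icc 1 n)
    (hij : (p : ℕ) + 1 ≠ i) :
    gFactor n (l0 - omegaW n (p + 1)) (mu - 2 • omegaW n (p + 1) + alphaW n (p + 1)) i =
      gFactor n l0 mu i := by
  rw [gFactor, gFactor, two_nsmul_sub_sub_sub_two_nsmul_add, formW_sub_left, formW_omegaW_alphaW hi,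
    if_neg hij, sub_zero, formW_sub_left, formW_alphaW_left, omegaW, if_neg hij, Int.cast_zero,
    sub_zero]

lemma gFactor_sub_omegaW_self (l0 mu : Wt n) (p : Fin n) :
    gFactor n (l0 - omegaW n (p + 1)) (mu - 2 • omegaW n (p + 1)) (p + 1) =
      qbinomQ ((l0 p : ℚ) - 1) (formW n (2 • l0 - mu) (omegaW n (p + 1))) := by
  rw [gFactor, formW_alphaW_right, two_nsmul_sub_sub_sub_two_nsmul, Pi.sub_apply, omegaW,
    if_pos rfl]
  push_cast
  rfl

lemma gFactor_sub_omegaW_add_alphaW_self (l0 mu : Wt n) (p : Fin n) :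
    gFactor n (l0 - omegaW n (p + 1)) (mu - 2 • omegaW n (p + 1) + alphaW n (p + 1)) (p + 1) =
      qbinomQ ((l0 p : ℚ) - 1) (formW n (2 • l0 - mu) (omegaW n (p + 1)) - 1) := by
  rw [gFactor, formW_alphaW_right, two_nsmul_sub_sub_sub_two_nsmul_add, formW_sub_left,
    formW_alphaW_left, Pi.sub_apply, omegaW, if_pos rfl]
  push_cast
  rfl

theorem gClosed_eq_sub_of_pos (l0 mu : Wt n) (p : Fin n) (hp : 0 < l0 p) :
    gClosed n l0 mu =
      qpow (formW n (2 • omegaW n (p + 1)) (2 • l0 - mu)) *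
          gClosed n (l0 - omegaW n (p + 1)) (mu - 2 • omegaW n (p + 1)) -
        qpow (formW n l0 (alphaW n (p + 1)) + formW n (2 • omegaW n (p + 1) - alphaW n (p + 1))
            (2 • l0 - alphaW n (p + 1) - mu)) *
          gClosed n (l0 - omegaW n (p + 1)) (mu - 2 • omegaW n (p + 1) + alphaW n (p + 1)) := by
  have hj : (p : ℕ) + 1 ∈ Icc 1 n := mem_Icc.mpr ⟨by omega, p.isLt⟩
  have hω : omegaW n (p + 1) p = 1 := if_pos rfl
  have hα : alphaW n (p + 1) p = 2 := if_pos rfl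
  have hexp₁ : formW n (2 • omegaW n (p + 1)) (2 • l0 - mu) =
      2 * formW n (2 • l0 - mu) (omegaW n (p + 1)) := by
    rw [formW_nsmul_left, formW_comm]
    push_cast
    rfl
  have hexp₂ : formW n l0 (alphaW n (p + 1)) +
      formW n (2 • omegaW n (p + 1) - alphaW n (p + 1)) (2 • l0 - alphaW n (p + 1) - mu) =
      2 * formW n (2 • l0 - mu) (omegaW n (p + 1)) + ((mu p - l0 p : ℤ) : ℚ) := by
    rw [show 2 • l0 - alphaW n (p + 1) - mu = 2 • l0 - mu - alphaW n (p + 1) by abel,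
      formW_sub_right, formW_alphaW_right, formW_alphaW_right, formW_sub_left, formW_nsmul_left,
      formW_alphaW_left, formW_comm (omegaW n _)]
    simp only [two_nsmul, Pi.sub_apply, Pi.add_apply, hω, hα]
    push_cast
    ring
  rw [gClosed_eq_mul_prod_erase l0 mu hj, gClosed_eq_mul_prod_erase _ (mu - 2 • omegaW n _) hj,
    gClosed_eq_mul_prod_erase _ (mu - 2 • omegaW n _ + alphaW n _) hj, hexp₁, hexp₂, gFactor,
    formW_alphaW_right, gFactor_sub_omegaW_self, gFactor_sub_omegaW_add_alphaW_self,
    gExponent_sub_omegaW, gExponent_sub_omegaW_add_alphaW, two_nsmul_sub_sub_sub_two_nsmul,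
    two_nsmul_sub_sub_sub_two_nsmul_add,
    prod_congr rfl fun i hi => gFactor_sub_omegaW_of_ne l0 mu (mem_of_mem_erase hi)
      (ne_of_mem_erase hi).symm,
    prod_congr rfl fun i hi => gFactor_sub_omegaW_add_alphaW_of_ne l0 mu p (mem_of_mem_erase hi)
      (ne_of_mem_erase hi).symm,
    formW_sub_left (2 • l0 - mu), formW_alphaW_left, rhoW, Int.cast_one]
  exact qbinomQ_pascal_step (by omega) _ _ _ _ _

lemma gClosed_zero_left (mu : Wt n) : gClosed n 0 mu = if mu = 0 then 1 else 0 := by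
  split_ifs with hmu
  · subst hmu
    simp [gClosed, formW_zero_left, qpow, negOnePow, qbinomQ_zero_zero]
  · obtain ⟨i, hi, hne⟩ : ∃ i ∈ Icc 1 n, formW n (2 • 0 - mu) (omegaW n i) ≠ 0 := by
      by_contra! h
      exact hmu (neg_eq_zero.mp (by simpa using eq_zero_of_formW_omegaW _ h))
    rw [gClosed, prod_eq_zero hi (by rw [formW_zero_left]; exact qbinomQ_zero_left hne), mul_zero]

end Weights

/-- the closed formula satisfies the recursion and initial condition. -/
theorem gClosed_recursion (n : ℕ) :
    (∀ mu : Wt n, gClosed n 0 mu = if mu = 0 then 1 else 0) ∧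
    (∀ (l0 mu : Wt n) (j : ℕ), IsDom n l0 → 1 ≤ j → j ≤ n →
      0 < formW n l0 (alphaW n j) →
      gClosed n l0 mu =
        qpow (formW n (2 • omegaW n j) (2 • l0 - mu)) *
          gClosed n (l0 - omegaW n j) (mu - 2 • omegaW n j) -
        qpow (formW n l0 (alphaW n j) +
            formW n (2 • omegaW n j - alphaW n j) (2 • l0 - alphaW n j - mu)) *
          gClosed n (l0 - omegaW n j) (mu - 2 • omegaW n j + alphaW n j)) := by
  refine ⟨gClosed_zero_left, fun l0 mu j _ hj1 hjn hpos => ?_⟩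
  obtain ⟨p, rfl⟩ : ∃ p : Fin n, (p : ℕ) + 1 = j :=
    ⟨⟨j - 1, by omega⟩, Nat.sub_add_cancel hj1⟩
  rw [formW_alphaW_right] at hpos
  exact gClosed_eq_sub_of_pos l0 mu p (by exact_mod_cast hpos)
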